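/- arXiv:0908.3929 — 4 statements merged into one kernel-verified Lean document; each statement's English description precedes it below -/
import Mathlib

section
/- Let 0 < v < 1 and let (X,Y), (x,y) ∈ ℝ². Define T := (√((1−v²)(X−x)² + (Y−y)²) − v(Y−y))/(1−v²). Then T ≥ 0, the Euclidean distance from (X,Y) to (x, y + vT) equals T, and for every T' ≥ 0 such that the Euclidean distance from (X,Y) to (x, y + vT') is at most T', one has T ≤ T'. In other words, T is the minimum time for a unit-speed vehicle starting at (X,Y) to intercept a target that starts at (x,y) and moves with constant velocity (0,v). -/
/-!
With `a = X - x`, `b = Y - y` and `c = 1 - v ^ 2`, the identity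
`c * (t ^ 2 - (a ^ 2 + (b - v * t) ^ 2)) = (c * t + v * b) ^ 2 - (c * a ^ 2 + b ^ 2)`
says that the vehicle can reach the target by time `t` exactly when `c * t + v * b` is at least
`√(c * a ^ 2 + b ^ 2)` in absolute value. The interception time `T` is where `c * T + v * b`
equals that square root, and along any feasible `t` the quantity `c * t + v * b = t + v * (b - v * t)`
is nonnegative because the target's offset `|b - v * t|` is at most `t`.
-/

open Real

noncomputable def interceptTime (v a b : ℝ) : ℝ :=
  (√((1 - v ^ 2) * a ^ 2 + b ^ 2) - v * b) / (1 - v ^ 2)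

lemma interception_identity (v a b t : ℝ) :
    (1 - v ^ 2) * (t ^ 2 - (a ^ 2 + (b - v * t) ^ 2)) =
      ((1 - v ^ 2) * t + v * b) ^ 2 - ((1 - v ^ 2) * a ^ 2 + b ^ 2) := by
  ring

section

variable {v : ℝ} (a b : ℝ)

lemma interceptTime_nonneg (hv : |v| ≤ 1) : 0 ≤ interceptTime v a b := by
  have hc : 0 ≤ 1 - v ^ 2 := sub_nonneg.2 ((sq_le_one_iff_abs_le_one v).2 hv)
  refine div_nonneg (sub_nonneg.2 ?_) hc
  calc v * b ≤ |v| * |b| := abs_mul v b ▸ le_abs_self _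
    _ ≤ |b| := mul_le_of_le_one_left (abs_nonneg b) hv
    _ ≤ √((1 - v ^ 2) * a ^ 2 + b ^ 2) := abs_le_sqrt (by nlinarith [sq_nonneg a])

lemma sqrt_sq_add_sq_interceptTime (hv : |v| < 1) :
    √(a ^ 2 + (b - v * interceptTime v a b) ^ 2) = interceptTime v a b := by
  have hc : 0 < 1 - v ^ 2 := sub_pos.2 ((sq_lt_one_iff_abs_lt_one v).2 hv)
  have hs : (1 - v ^ 2) * interceptTime v a b + v * b = √((1 - v ^ 2) * a ^ 2 + b ^ 2) := by
    rw [interceptTime, mul_div_cancel₀ _ hc.ne', sub_add_cancel]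
  have hT := interception_identity v a b (interceptTime v a b)
  rw [hs, sq_sqrt (by nlinarith [sq_nonneg a, sq_nonneg b]), sub_self,
    mul_eq_zero, or_iff_right hc.ne', sub_eq_zero] at hT
  rw [← hT, sqrt_sq (interceptTime_nonneg a b hv.le)]

lemma interceptTime_le {t : ℝ} (hv : |v| < 1) (ht : √(a ^ 2 + (b - v * t) ^ 2) ≤ t) :
    interceptTime v a b ≤ t := by
  have hc : 0 < 1 - v ^ 2 := sub_pos.2 ((sq_lt_one_iff_abs_lt_one v).2 hv)
  obtain ⟨ht0, hreach⟩ := sqrt_le_iff.1 ht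
  have hoffset : |b - v * t| ≤ t := abs_le_of_sq_le_sq (by nlinarith [sq_nonneg a]) ht0
  have hpos : 0 ≤ (1 - v ^ 2) * t + v * b :=
    calc 0 ≤ t - |v| * |b - v * t| := by nlinarith [abs_nonneg (b - v * t)]
      _ ≤ t + v * (b - v * t) := by linarith [abs_mul v (b - v * t) ▸ neg_abs_le (v * (b - v * t))]
      _ = (1 - v ^ 2) * t + v * b := by ring
  have hs : √((1 - v ^ 2) * a ^ 2 + b ^ 2) ≤ (1 - v ^ 2) * t + v * b := by
    rw [sqrt_le_left hpos]
    nlinarith [interception_identity v a b t]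
  rw [interceptTime, div_le_iff₀ hc]
  linarith

end

/-- minimality of the interception time `T` for a unit-speed
vehicle starting at `(X,Y)` chasing a target starting at `(x,y)` with
velocity `(0,v)`, where `0 < v < 1`. -/
theorem stmt0 (v X Y x y T : ℝ) (hv0 : 0 < v) (hv1 : v < 1)
    (hT : T = (Real.sqrt ((1 - v ^ 2) * (X - x) ^ 2 + (Y - y) ^ 2) - v * (Y - y)) / (1 - v ^ 2)) :
    0 ≤ T ∧
    Real.sqrt ((X - x) ^ 2 + (Y - (y + v * T)) ^ 2) = T ∧
    ∀ T' : ℝ, 0 ≤ T' →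
      Real.sqrt ((X - x) ^ 2 + (Y - (y + v * T')) ^ 2) ≤ T' → T ≤ T' := by
  have hv : |v| < 1 := abs_lt.2 ⟨by linarith, hv1⟩
  have hT' : T = interceptTime v (X - x) (Y - y) := hT
  have hoffset (t : ℝ) : Y - (y + v * t) = Y - y - v * t := by ring
  simp only [hoffset, hT']
  exact ⟨interceptTime_nonneg _ _ hv.le, sqrt_sq_add_sq_interceptTime _ _ hv,
    fun _ _ => interceptTime_le _ _ hv⟩
end

section
/- Let 0 < v < 1 and let p₀, p₁, …, pₙ be points in ℝ² with pᵢ = (xᵢ, yᵢ). For points p = (X,Y) and q = (x,y) define T_v(p,q) := (√((1−v²)(X−x)² + (Y−y)²) − v(Y−y))/(1−v²), and define g : ℝ² → ℝ² by g(x,y) = (x/√(1−v²), y/(1−v²)). Then Σ_{i=0}^{n−1} T_v(pᵢ, p_{i+1}) = Σ_{i=0}^{n−1} ‖g(p_{i+1}) − g(pᵢ)‖ + v(yₙ − y₀)/(1−v²). That is, the total time for a unit-speed vehicle to sequentially intercept targets that all translate with velocity (0,v), visiting them in the order p₁,…,pₙ starting from p₀, equals the Euclidean length of the polygonal path through the transformed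 points g(p₀),…,g(pₙ) plus a term depending only on the initial and final y-coordinates. -/
/-!
The quantity `√((1 - v²)(X - x)² + (Y - y)²) / (1 - v²)` is exactly the Euclidean distance
between `g(X, Y)` and `g(x, y)`, so each interception time splits as
`T_v(p, q) = ‖g q - g p‖ + v (y_q - y_p) / (1 - v²)`. Summing along the path, the second
terms telescope to `v (yₙ - y₀) / (1 - v²)`.
-/

open scoped BigOperators

/-- The minimum interception time for a unit-speed vehicle at `p = (X,Y)`
to catch a target starting at `q = (x,y)` moving with velocity `(0,v)`. -/
noncomputable def Tv (v : ℝ) (p q : ℝ × ℝ) : ℝ :=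
  (Real.sqrt ((1 - v ^ 2) * (p.1 - q.1) ^ 2 + (p.2 - q.2) ^ 2) - v * (p.2 - q.2)) / (1 - v ^ 2)

/-- The coordinate transformation `g(x,y) = (x/√(1−v²), y/(1−v²))`, valued in
the Euclidean plane. -/
noncomputable def gmap (v : ℝ) (p : ℝ × ℝ) : EuclideanSpace ℝ (Fin 2) :=
  (WithLp.equiv 2 (Fin 2 → ℝ)).symm ![p.1 / Real.sqrt (1 - v ^ 2), p.2 / (1 - v ^ 2)]

theorem Fin.sum_succ_sub_castSucc {M : Type*} [AddCommGroup M] {n : ℕ} (f : Fin (n + 1) → M) :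
    ∑ i : Fin n, (f i.succ - f i.castSucc) = f (Fin.last n) - f 0 := by
  have h : f 0 + ∑ i : Fin n, f i.succ = ∑ i : Fin n, f i.castSucc + f (Fin.last n) :=
    (Fin.sum_univ_succ f).symm.trans (Fin.sum_univ_castSucc f)
  rw [Finset.sum_sub_distrib, sub_eq_sub_iff_add_eq_add, add_comm, h, add_comm]

theorem norm_gmap_sub {v : ℝ} (hv : v ^ 2 < 1) (p q : ℝ × ℝ) :
    ‖gmap v q - gmap v p‖
      = Real.sqrt ((1 - v ^ 2) * (p.1 - q.1) ^ 2 + (p.2 - q.2) ^ 2) / (1 - v ^ 2) := by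
  have hc : 0 < 1 - v ^ 2 := by linarith
  have hs : Real.sqrt (1 - v ^ 2) ^ 2 = 1 - v ^ 2 := Real.sq_sqrt hc.le
  have hsq : (q.1 / Real.sqrt (1 - v ^ 2) - p.1 / Real.sqrt (1 - v ^ 2)) ^ 2
      + (q.2 / (1 - v ^ 2) - p.2 / (1 - v ^ 2)) ^ 2
      = ((1 - v ^ 2) * (p.1 - q.1) ^ 2 + (p.2 - q.2) ^ 2) / (1 - v ^ 2) ^ 2 := by
    field_simp
    rw [hs]
    ring
  rw [← dist_eq_norm, EuclideanSpace.dist_eq, Fin.sum_univ_two]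
  simp only [gmap, WithLp.equiv_symm_apply, WithLp.ofLp_toLp, Matrix.cons_val_zero,
    Matrix.cons_val_one, Real.dist_eq, sq_abs]
  rw [hsq, Real.sqrt_div (by positivity), Real.sqrt_sq hc.le]

theorem Tv_eq_norm_gmap_sub_add {v : ℝ} (hv : v ^ 2 < 1) (p q : ℝ × ℝ) :
    Tv v p q = ‖gmap v q - gmap v p‖ + v * (q.2 - p.2) / (1 - v ^ 2) := by
  rw [norm_gmap_sub hv, Tv]
  ring

/-- the total sequential interception time along the order
`p₀, p₁, …, pₙ` equals the Euclidean length of the polygonal path through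
`g(p₀),…,g(pₙ)` plus `v(yₙ − y₀)/(1 − v²)`. -/
theorem stmt2 (v : ℝ) (hv0 : 0 < v) (hv1 : v < 1) (n : ℕ)
    (p : Fin (n + 1) → ℝ × ℝ) :
    ∑ i : Fin n, Tv v (p i.castSucc) (p i.succ)
      = (∑ i : Fin n, ‖gmap v (p i.succ) - gmap v (p i.castSucc)‖)
        + v * ((p (Fin.last n)).2 - (p 0).2) / (1 - v ^ 2) := by
  have hv : v ^ 2 < 1 := by nlinarith
  simp only [Tv_eq_norm_gmap_sub_add hv, Finset.sum_add_distrib, ← Finset.sum_div,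
    ← Finset.mul_sum, Fin.sum_succ_sub_castSucc fun i => (p i).2]
end

section
/- (Reachability characterization.) Let v > 0 and let (X,Y), (x,y) ∈ ℝ². There exists T ≥ 0 such that the Euclidean distance from (X,Y) to (x, y + vT) is at most T and y + vT ≤ Y, if and only if v·|X − x| ≤ Y − y. In words: a unit-speed vehicle at (X,Y) can intercept a target at (x,y) moving with velocity (0,v) at a meeting point whose height does not exceed Y, exactly when v|X−x| ≤ Y − y. -/
/-!
The horizontal gap `|X - x|` never exceeds the distance to the target, so any interception
time `T` satisfies `|X - x| ≤ T`, and by then the target has climbed `v T ≥ v |X - x|`.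
Conversely, when `v |X - x| ≤ Y - y` the vehicle meets the target exactly at height `Y`,
at time `(Y - y) / v`, when the remaining distance is just the horizontal gap.
-/

lemma mul_abs_le_of_intercept {v X Y x y T : ℝ} (hv : 0 ≤ v)
    (hdist : Real.sqrt ((X - x) ^ 2 + (Y - (y + v * T)) ^ 2) ≤ T) (hheight : y + v * T ≤ Y) :
    v * |X - x| ≤ Y - y := by
  have hgap : |X - x| ≤ T :=
    (Real.abs_le_sqrt (le_add_of_nonneg_right (sq_nonneg _))).trans hdist
  linarith [mul_le_mul_of_nonneg_left hgap hv]

lemma intercept_at_height_of_mul_abs_le {v X Y x y : ℝ} (hv : 0 < v)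
    (h : v * |X - x| ≤ Y - y) :
    0 ≤ (Y - y) / v ∧
      Real.sqrt ((X - x) ^ 2 + (Y - (y + v * ((Y - y) / v))) ^ 2) ≤ (Y - y) / v ∧
      y + v * ((Y - y) / v) ≤ Y := by
  have hclimb : v * ((Y - y) / v) = Y - y := mul_div_cancel₀ _ hv.ne'
  refine ⟨div_nonneg ((by positivity : 0 ≤ v * |X - x|).trans h) hv.le, ?_, by linarith⟩
  rw [hclimb, show Y - (y + (Y - y)) = 0 by ring, zero_pow two_ne_zero, add_zero,
    Real.sqrt_sq_eq_abs, le_div_iff₀ hv, mul_comm]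
  exact h

/-- Reachability characterization: a unit-speed vehicle at
`(X,Y)` can intercept a target at `(x,y)` moving with velocity `(0,v)` at a
meeting point of height at most `Y` iff `v·|X − x| ≤ Y − y`. -/
theorem stmt4 (v X Y x y : ℝ) (hv : 0 < v) :
    (∃ T : ℝ, 0 ≤ T ∧ Real.sqrt ((X - x) ^ 2 + (Y - (y + v * T)) ^ 2) ≤ T ∧
      y + v * T ≤ Y)
    ↔ v * |X - x| ≤ Y - y :=
  ⟨fun ⟨_, _, hdist, hheight⟩ => mul_abs_le_of_intercept hv.le hdist hheight,
    fun h => ⟨_, intercept_at_height_of_mul_abs_le hv h⟩⟩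
end

section
/- (Asymptotic equality of EMHP and ETSP.) Let E ⊆ ℝ² be a bounded set, let s, f ∈ E, let (Qₙ) be a sequence of finite subsets of E with |Qₙ| → ∞ as n → ∞, and let c ∈ ℝ. If ETSP(Qₙ)/√|Qₙ| → c as n → ∞, then EMHP(s, Qₙ, f)/√|Qₙ| → c as n → ∞. -/
/-! Cutting the closing edge of a tour and attaching `s` and `f` at its two ends, or conversely,
changes the length by at most two diameters of the bounded set `E`. Hence `EMHP(s, Qₙ, f)` and
`ETSP(Qₙ)` differ by `O(1)`, which vanishes after division by `√|Qₙ| → ∞`. -/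

/-- Euclidean length of a polygonal path through a list of points. -/
noncomputable def pathLength : List (EuclideanSpace ℝ (Fin 2)) → ℝ
  | [] => 0
  | [_] => 0
  | p :: q :: rest => ‖q - p‖ + pathLength (q :: rest)

/-- Euclidean length of the closed tour through a list of points (the path
through the list followed by the return edge to the starting point); `0` for
lists with at most one point. -/
noncomputable def tourLength : List (EuclideanSpace ℝ (Fin 2)) → ℝ
  | [] => 0
  | p :: rest => pathLength ((p :: rest) ++ [p])

/-- `ETSP Q`: the minimum, over all orderings of the finite set `Q`, of the
length of the closed tour through `Q` (equal to `0` when `|Q| ≤ 1`). -/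
noncomputable def ETSP (Q : Finset (EuclideanSpace ℝ (Fin 2))) : ℝ :=
  sInf {c : ℝ | ∃ l : List (EuclideanSpace ℝ (Fin 2)), l.Nodup ∧ (∀ x, x ∈ l ↔ x ∈ Q) ∧
    c = tourLength l}

/-- `EMHP s Q f`: the minimum, over all orderings of the finite set `Q`, of the
Euclidean length of the path starting at `s`, visiting every point of `Q`
exactly once, and terminating at `f`. -/
noncomputable def EMHP (s : EuclideanSpace ℝ (Fin 2)) (Q : Finset (EuclideanSpace ℝ (Fin 2)))
    (f : EuclideanSpace ℝ (Fin 2)) : ℝ :=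
  sInf {c : ℝ | ∃ l : List (EuclideanSpace ℝ (Fin 2)), l.Nodup ∧ (∀ x, x ∈ l ↔ x ∈ Q) ∧
    c = pathLength (s :: (l ++ [f]))}

open Filter Metric

local notation "Pt" => EuclideanSpace ℝ (Fin 2)

lemma pathLength_nonneg : ∀ l : List Pt, 0 ≤ pathLength l
  | [] | [_] => le_rfl
  | _ :: q :: rest => add_nonneg (norm_nonneg _) (pathLength_nonneg (q :: rest))

lemma tourLength_nonneg : ∀ l : List Pt, 0 ≤ tourLength l
  | [] => le_rfl
  | _ :: _ => pathLength_nonneg _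

lemma pathLength_append_singleton : ∀ (l : List Pt) (h : l ≠ []) (x : Pt),
    pathLength (l ++ [x]) = pathLength l + ‖x - l.getLast h‖
  | [a], _, x => by simp [pathLength]
  | a :: b :: t, _, x => by
      rw [List.cons_append, List.cons_append, pathLength, ← List.cons_append,
        pathLength_append_singleton (b :: t) (List.cons_ne_nil _ _) x, pathLength,
        List.getLast_cons (List.cons_ne_nil _ _)]
      ring

lemma tourLength_cons (a : Pt) (t : List Pt) :
    tourLength (a :: t) = pathLength (a :: t) + ‖a - (a :: t).getLast (List.cons_ne_nil _ _)‖ :=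
  pathLength_append_singleton _ _ a

lemma pathLength_cons_append_singleton (s a f : Pt) (t : List Pt) :
    pathLength (s :: (a :: t ++ [f])) =
      ‖a - s‖ + pathLength (a :: t) + ‖f - (a :: t).getLast (List.cons_ne_nil _ _)‖ := by
  rw [List.cons_append, pathLength, ← List.cons_append, pathLength_append_singleton, add_assoc]

section Comparison

variable {E : Set Pt} (hE : Bornology.IsBounded E)
include hE

lemma tourLength_le_pathLength_add_diam (s f : Pt) :
    ∀ l : List Pt, (∀ x ∈ l, x ∈ E) → tourLength l ≤ pathLength (s :: (l ++ [f])) + diam E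
  | [], _ => add_nonneg (pathLength_nonneg _) diam_nonneg
  | a :: t, hl => by
      have hclose : ‖a - (a :: t).getLast (List.cons_ne_nil _ _)‖ ≤ diam E := by
        rw [← dist_eq_norm]
        exact dist_le_diam_of_mem hE (hl a List.mem_cons_self) (hl _ (List.getLast_mem _))
      rw [tourLength_cons, pathLength_cons_append_singleton]
      linarith [norm_nonneg (a - s), norm_nonneg (f - (a :: t).getLast (List.cons_ne_nil _ _))]

lemma pathLength_le_tourLength_add_two_mul_diam {s f : Pt} (hs : s ∈ E) (hf : f ∈ E) :
    ∀ l : List Pt, (∀ x ∈ l, x ∈ E) → pathLength (s :: (l ++ [f])) ≤ tourLength l + 2 * diam E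
  | [], _ => by
      have hsf : ‖f - s‖ ≤ diam E := by
        rw [← dist_eq_norm]
        exact dist_le_diam_of_mem hE hf hs
      simp only [List.nil_append, pathLength, tourLength]
      linarith [diam_nonneg (s := E)]
  | a :: t, hl => by
      have hstart : ‖a - s‖ ≤ diam E := by
        rw [← dist_eq_norm]
        exact dist_le_diam_of_mem hE (hl a List.mem_cons_self) hs
      have hend : ‖f - (a :: t).getLast (List.cons_ne_nil _ _)‖ ≤ diam E := by
        rw [← dist_eq_norm]
        exact dist_le_diam_of_mem hE hf (hl _ (List.getLast_mem _))
      rw [tourLength_cons, pathLength_cons_append_singleton]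
      linarith [norm_nonneg (a - (a :: t).getLast (List.cons_ne_nil _ _))]

end Comparison

section Optimal

variable (s f : Pt) (Q : Finset Pt)

lemma ETSP_le_tourLength {l : List Pt} (hl : l.Nodup) (hlQ : ∀ x, x ∈ l ↔ x ∈ Q) :
    ETSP Q ≤ tourLength l :=
  csInf_le ⟨0, fun _ ⟨l', _, _, hc⟩ => hc ▸ tourLength_nonneg l'⟩ ⟨l, hl, hlQ, rfl⟩

lemma EMHP_le_pathLength {l : List Pt} (hl : l.Nodup) (hlQ : ∀ x, x ∈ l ↔ x ∈ Q) :
    EMHP s Q f ≤ pathLength (s :: (l ++ [f])) :=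
  csInf_le ⟨0, fun _ ⟨_, _, _, hc⟩ => hc ▸ pathLength_nonneg _⟩ ⟨l, hl, hlQ, rfl⟩

lemma le_ETSP {b : ℝ} (h : ∀ l : List Pt, l.Nodup → (∀ x, x ∈ l ↔ x ∈ Q) → b ≤ tourLength l) :
    b ≤ ETSP Q :=
  le_csInf ⟨_, Q.toList, Q.nodup_toList, fun _ => Finset.mem_toList, rfl⟩
    fun _ ⟨l, hl, hlQ, hc⟩ => hc ▸ h l hl hlQ

lemma le_EMHP {b : ℝ}
    (h : ∀ l : List Pt, l.Nodup → (∀ x, x ∈ l ↔ x ∈ Q) → b ≤ pathLength (s :: (l ++ [f]))) :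
    b ≤ EMHP s Q f :=
  le_csInf ⟨_, Q.toList, Q.nodup_toList, fun _ => Finset.mem_toList, rfl⟩
    fun _ ⟨l, hl, hlQ, hc⟩ => hc ▸ h l hl hlQ

variable {E : Set Pt} (hE : Bornology.IsBounded E) (hQE : ↑Q ⊆ E)
include hE hQE

lemma ETSP_le_EMHP_add_diam : ETSP Q ≤ EMHP s Q f + diam E := by
  rw [← sub_le_iff_le_add]
  refine le_EMHP s f Q fun l hl hlQ => sub_le_iff_le_add.2 ?_
  exact (ETSP_le_tourLength Q hl hlQ).trans
    (tourLength_le_pathLength_add_diam hE s f l fun x hx => hQE ((hlQ x).1 hx))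

lemma EMHP_le_ETSP_add_two_mul_diam {s f : Pt} (hs : s ∈ E) (hf : f ∈ E) :
    EMHP s Q f ≤ ETSP Q + 2 * diam E := by
  rw [← sub_le_iff_le_add]
  refine le_ETSP Q fun l hl hlQ => sub_le_iff_le_add.2 ?_
  exact (EMHP_le_pathLength s f Q hl hlQ).trans
    (pathLength_le_tourLength_add_two_mul_diam hE hs hf l fun x hx => hQE ((hlQ x).1 hx))

lemma abs_EMHP_sub_ETSP_le {s f : Pt} (hs : s ∈ E) (hf : f ∈ E) :
    |EMHP s Q f - ETSP Q| ≤ 2 * diam E := by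
  have := ETSP_le_EMHP_add_diam s f Q hE hQE
  have := EMHP_le_ETSP_add_two_mul_diam Q hE hQE hs hf
  rw [abs_sub_le_iff]
  constructor <;> linarith [diam_nonneg (s := E)]

end Optimal

/-- Asymptotic equality of EMHP and ETSP: if `E` is bounded,
`s, f ∈ E`, `Qₙ ⊆ E` are finite sets with `|Qₙ| → ∞`, and
`ETSP(Qₙ)/√|Qₙ| → c`, then `EMHP(s,Qₙ,f)/√|Qₙ| → c`. -/
theorem stmt9 (E : Set (EuclideanSpace ℝ (Fin 2))) (hE : Bornology.IsBounded E)
    (s f : EuclideanSpace ℝ (Fin 2)) (hs : s ∈ E) (hf : f ∈ E)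
    (Q : ℕ → Finset (EuclideanSpace ℝ (Fin 2))) (hQE : ∀ n, ↑(Q n) ⊆ E)
    (hcard : Tendsto (fun n => (Q n).card) atTop atTop) (c : ℝ)
    (hETSP : Tendsto (fun n => ETSP (Q n) / Real.sqrt ((Q n).card)) atTop (nhds c)) :
    Tendsto (fun n => EMHP s (Q n) f / Real.sqrt ((Q n).card)) atTop (nhds c) := by
  have hsqrt : Tendsto (fun n => Real.sqrt ((Q n).card)) atTop atTop :=
    Real.tendsto_sqrt_atTop.comp (tendsto_natCast_atTop_atTop.comp hcard)
  have hdiff : Tendsto (fun n => (EMHP s (Q n) f - ETSP (Q n)) / Real.sqrt ((Q n).card))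
      atTop (nhds 0) := by
    refine squeeze_zero_norm (fun n => ?_) ((tendsto_const_nhds (x := 2 * diam E)).div_atTop hsqrt)
    rw [norm_div, Real.norm_eq_abs, Real.norm_of_nonneg (Real.sqrt_nonneg _)]
    exact div_le_div_of_nonneg_right (abs_EMHP_sub_ETSP_le (Q n) hE (hQE n) hs hf)
      (Real.sqrt_nonneg _)
  simpa [sub_div] using hETSP.add hdiff
end
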